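/- Let n ≥ 1 and let S_n be the star graph on vertices {0,1,...,n-1}. The number of partial strong weak endomorphisms of S_n equals 2n^{n-1} + n·2^n − n − 1. -/

import Mathlib

def pmul {V : Type*} (f g : V → Option V) : V → Option V := fun x => (f x).bind g

def pdom {V : Type*} (f : V → Option V) : Set V := {x | f x ≠ none}

def pim {V : Type*} (f : V → Option V) : Set V := {y | ∃ x, f x = some y}

def pker {V : Type*} (f : V → Option V) : V → V → Prop := fun x y => f x ≠ none ∧ f x = f y

def PInj {V : Type*} (f : V → Option V) : Prop := ∀ u v a, f u = some a → f v = some a → u = v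

def edge {n : ℕ} (u v : Fin n) : Prop := (u.val = 0 ∧ v.val ≠ 0) ∨ (v.val = 0 ∧ u.val ≠ 0)

def IsPEnd {n : ℕ} (α : Fin n → Option (Fin n)) : Prop :=
  ∀ u v a b, α u = some a → α v = some b → edge u v → edge a b

def IsPwEnd {n : ℕ} (α : Fin n → Option (Fin n)) : Prop :=
  ∀ u v a b, α u = some a → α v = some b → edge u v → a ≠ b → edge a b

def IsPsEnd {n : ℕ} (α : Fin n → Option (Fin n)) : Prop :=
  ∀ u v a b, α u = some a → α v = some b → (edge u v ↔ edge a b)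

def IsPswEnd {n : ℕ} (α : Fin n → Option (Fin n)) : Prop :=
  ∀ u v a b, α u = some a → α v = some b → ((edge u v ∧ a ≠ b) ↔ edge a b)

def PEndS (n : ℕ) : Set (Fin n → Option (Fin n)) := {α | IsPEnd α}
def PwEndS (n : ℕ) : Set (Fin n → Option (Fin n)) := {α | IsPwEnd α}
def PsEndS (n : ℕ) : Set (Fin n → Option (Fin n)) := {α | IsPsEnd α}
def PswEndS (n : ℕ) : Set (Fin n → Option (Fin n)) := {α | IsPswEnd α}
def IEndS (n : ℕ) : Set (Fin n → Option (Fin n)) := {α | PInj α ∧ IsPEnd α}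
def PAutS (n : ℕ) : Set (Fin n → Option (Fin n)) := {α | PInj α ∧ IsPsEnd α}

def RegularIn {V : Type*} (M : Set (V → Option V)) (a : V → Option V) : Prop :=
  ∃ b ∈ M, pmul (pmul a b) a = a

def GreenL {V : Type*} (M : Set (V → Option V)) (a b : V → Option V) : Prop :=
  (∃ g ∈ M, a = pmul g b) ∧ (∃ g ∈ M, b = pmul g a)

def GreenR {V : Type*} (M : Set (V → Option V)) (a b : V → Option V) : Prop :=
  (∃ g ∈ M, a = pmul b g) ∧ (∃ g ∈ M, b = pmul a g)

def GreenH {V : Type*} (M : Set (V → Option V)) (a b : V → Option V) : Prop :=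
  GreenL M a b ∧ GreenR M a b

def GreenJ {V : Type*} (M : Set (V → Option V)) (a b : V → Option V) : Prop :=
  (∃ g ∈ M, ∃ h ∈ M, a = pmul (pmul g b) h) ∧ (∃ g ∈ M, ∃ h ∈ M, b = pmul (pmul g a) h)

/-! Write `α = Fin.cons x g` with `x` the image of the centre and `g` the images of the `m = n - 1`
leaves. The strong weak condition splits into a condition on each pair (centre, leaf) and the
requirement that the leaf images be pairwise non-adjacent, i.e. all equal to the centre `0` or all
leaves. If `x` is undefined or `0` the first condition is void, leaving `2 ^ m + n ^ m - 1` maps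
`g`; if `x = c ≠ 0` the leaves must go to `0` or `c`, and not to both, leaving `2 ^ (m + 1) - 1`.
Summing over `x` gives `2 (2 ^ m + n ^ m - 1) + m (2 ^ (m + 1) - 1)`. -/

open Finset

lemma forall_mem_iff_iff_forall_or_forall_not {ι β : Type*} (p : β → Prop) (g : ι → Option β) :
    (∀ i j, ∀ a ∈ g i, ∀ b ∈ g j, (p a ↔ p b)) ↔
      (∀ i, ∀ b ∈ g i, p b) ∨ ∀ i, ∀ b ∈ g i, ¬ p b := by
  constructor
  · intro h
    by_contra! hne
    obtain ⟨⟨i, a, ha, hpa⟩, ⟨j, b, hb, hpb⟩⟩ := hne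
    exact hpa ((h i j a ha b hb).mpr hpb)
  · rintro (h | h) i j a ha b hb
    · exact iff_of_true (h i a ha) (h j b hb)
    · exact iff_of_false (h i a ha) (h j b hb)

lemma card_forall_mem_or_forall_mem_add_one {ι β : Type*} [Fintype ι] [DecidableEq ι] [Fintype β]
    [DecidableEq β] (p q : β → Prop) (hpq : ∀ b, p b → ¬ q b) :
    Nat.card {g : ι → Option β // (∀ i, ∀ b ∈ g i, p b) ∨ ∀ i, ∀ b ∈ g i, q b} + 1 =
      (Nat.card {b // p b} + 1) ^ Fintype.card ι + (Nat.card {b // q b} + 1) ^ Fintype.card ι := by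
  classical
  set P : Finset (ι → Option β) := Fintype.piFinset fun _ => insertNone {b | p b}
  set Q : Finset (ι → Option β) := Fintype.piFinset fun _ => insertNone {b | q b}
  have hunion : Nat.card {g : ι → Option β // (∀ i, ∀ b ∈ g i, p b) ∨ ∀ i, ∀ b ∈ g i, q b} =
      #(P ∪ Q) := by
    rw [Nat.card_eq_fintype_card, Fintype.card_subtype]
    congr 1
    ext g
    simp [P, Q, mem_insertNone]
  have hinter : #(P ∩ Q) = 1 := by
    have : P ∩ Q = Fintype.piFinset fun _ => {none} := by
      rw [← Fintype.piFinset_inter]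
      congr 1
      ext i (_ | b)
      · simp
      · simpa [mem_insertNone] using hpq b
    simp [this]
  have hcard (r : β → Prop) [DecidablePred r] :
      #(Fintype.piFinset fun _ : ι => insertNone {b | r b}) =
        (Nat.card {b // r b} + 1) ^ Fintype.card ι := by
    simp [Fintype.card_piFinset, Nat.card_eq_fintype_card, Fintype.card_subtype]
  calc _ = #(P ∪ Q) + #(P ∩ Q) := by rw [hunion, hinter]
    _ = #P + #Q := card_union_add_card_inter P Q
    _ = _ := congrArg₂ (· + ·) (hcard p) (hcard q)

section Star

variable {m : ℕ}

lemma edge_comm {n : ℕ} (u v : Fin n) : edge u v ↔ edge v u := or_comm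

lemma edge_iff (u v : Fin (m + 1)) : edge u v ↔ (u = 0 ↔ v ≠ 0) := by
  simp only [edge, ne_eq, Fin.ext_iff, Fin.val_zero]
  tauto

lemma isPswEnd_cons_iff (x : Option (Fin (m + 1))) (g : Fin m → Option (Fin (m + 1))) :
    IsPswEnd (Fin.cons x g : Fin (m + 1) → Option (Fin (m + 1))) ↔
      (∀ a ∈ x, ∀ i, ∀ b ∈ g i, (a ≠ b ↔ edge a b)) ∧
        ∀ i j, ∀ a ∈ g i, ∀ b ∈ g j, ¬ edge a b := by
  constructor
  · intro h
    refine ⟨fun a ha i b hb => ?_, fun i j a ha b hb => ?_⟩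
    · simpa [edge_iff, Fin.succ_ne_zero] using h 0 i.succ a b ha hb
    · simpa [edge_iff, Fin.succ_ne_zero] using h i.succ j.succ a b ha hb
  · rintro ⟨hcenter, hleaf⟩ u v a b hu hv
    cases u using Fin.cases with
    | zero => cases v using Fin.cases with
      | zero =>
        obtain rfl : a = b := Option.some_injective _ (hu.symm.trans hv)
        simp [edge]
      | succ j => simpa [edge_iff, Fin.succ_ne_zero] using hcenter a hu j b hv
    | succ i => cases v using Fin.cases with
      | zero => simpa [edge_comm, ne_comm, edge_iff, Fin.succ_ne_zero] using hcenter b hv i a hu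
      | succ j => simpa [edge_iff, Fin.succ_ne_zero] using hleaf i j a hu b hv

lemma not_edge_iff (u v : Fin (m + 1)) : ¬ edge u v ↔ (u = 0 ↔ v = 0) := by
  rw [edge_iff, not_iff, not_iff_not]

lemma isPswEnd_cons_iff_of_center_zero (x : Option (Fin (m + 1))) (hx : ∀ a ∈ x, a = 0)
    (g : Fin m → Option (Fin (m + 1))) :
    IsPswEnd (Fin.cons x g : Fin (m + 1) → Option (Fin (m + 1))) ↔
      (∀ i, ∀ b ∈ g i, b = 0) ∨ ∀ i, ∀ b ∈ g i, b ≠ 0 := by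
  have hcenter : ∀ a ∈ x, ∀ i, ∀ b ∈ g i, (a ≠ b ↔ edge a b) := by
    intro a ha i b _
    simp [hx a ha, edge_iff, eq_comm]
  rw [isPswEnd_cons_iff, and_iff_right hcenter]
  simp only [not_edge_iff]
  exact forall_mem_iff_iff_forall_or_forall_not _ g

lemma ne_iff_edge_iff {c : Fin (m + 1)} (hc : c ≠ 0) (b : Fin (m + 1)) :
    (c ≠ b ↔ edge c b) ↔ (b = 0 ∨ b = c) := by
  rcases eq_or_ne b 0 with rfl | hb
  · simp [edge_iff, hc]
  · simp [edge_iff, hc, hb, eq_comm]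

lemma isPswEnd_cons_iff_of_center_ne_zero (c : Fin (m + 1)) (hc : c ≠ 0)
    (g : Fin m → Option (Fin (m + 1))) :
    IsPswEnd (Fin.cons (some c) g : Fin (m + 1) → Option (Fin (m + 1))) ↔
      (∀ i, ∀ b ∈ g i, b = 0) ∨ ∀ i, ∀ b ∈ g i, b = c := by
  rw [isPswEnd_cons_iff]
  simp only [Option.mem_some_iff, forall_eq', ne_iff_edge_iff hc, not_edge_iff]
  rw [forall_mem_iff_iff_forall_or_forall_not (· = 0)]
  constructor
  · rintro ⟨hzc, hz | hnz⟩
    · exact Or.inl hz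
    · exact Or.inr fun i b hb => (hzc i b hb).resolve_left (hnz i b hb)
  · rintro (hz | hc')
    · exact ⟨fun i b hb => Or.inl (hz i b hb), Or.inl hz⟩
    · exact ⟨fun i b hb => Or.inr (hc' i b hb), Or.inr fun i b hb => hc' i b hb ▸ hc⟩

lemma card_isPswEnd_cons_of_center_zero (x : Option (Fin (m + 1)))
    (hx : ∀ a ∈ x, a = 0) :
    Nat.card {g : Fin m → Option (Fin (m + 1)) //
      IsPswEnd (Fin.cons x g : Fin (m + 1) → Option (Fin (m + 1)))} + 1 = 2 ^ m + (m + 1) ^ m := by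
  rw [Nat.card_congr (Equiv.subtypeEquivRight (isPswEnd_cons_iff_of_center_zero x hx)),
    card_forall_mem_or_forall_mem_add_one _ _ fun _ h => not_not_intro h]
  simp [Nat.card_eq_fintype_card, Fintype.card_subtype_compl]

lemma card_isPswEnd_cons_of_center_ne_zero (c : Fin (m + 1)) (hc : c ≠ 0) :
    Nat.card {g : Fin m → Option (Fin (m + 1)) //
      IsPswEnd (Fin.cons (some c) g : Fin (m + 1) → Option (Fin (m + 1)))} + 1 = 2 ^ m + 2 ^ m := by
  rw [Nat.card_congr (Equiv.subtypeEquivRight (isPswEnd_cons_iff_of_center_ne_zero c hc)),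
    card_forall_mem_or_forall_mem_add_one (· = 0) (· = c) fun _ h h' => hc (h' ▸ h)]
  simp

lemma ncard_pswEndS_succ :
    (PswEndS (m + 1)).ncard = ∑ x : Option (Fin (m + 1)),
      Nat.card {g : Fin m → Option (Fin (m + 1)) //
        IsPswEnd (Fin.cons x g : Fin (m + 1) → Option (Fin (m + 1)))} := by
  rw [← Nat.card_coe_set_eq, ← Nat.card_sigma]
  exact Nat.card_congr ((Equiv.subtypeEquiv (Fin.consEquiv _) fun _ => Iff.rfl).symm.trans
    (Equiv.subtypeProdEquivSigmaSubtype fun x g => IsPswEnd (Fin.cons x g : Fin (m + 1) → _)))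

end Star

theorem stmt7 (n : ℕ) (hn : 1 ≤ n) :
    (PswEndS n).ncard = 2 * n ^ (n - 1) + n * 2 ^ n - n - 1 := by
  obtain ⟨m, rfl⟩ := Nat.exists_eq_add_of_le' hn
  have hsum : ∑ x : Option (Fin (m + 1)), (Nat.card {g : Fin m → Option (Fin (m + 1)) //
      IsPswEnd (Fin.cons x g : Fin (m + 1) → Option (Fin (m + 1)))} + 1) =
      2 * (2 ^ m + (m + 1) ^ m) + m * (2 ^ m + 2 ^ m) := by
    rw [Fintype.sum_option, Fin.sum_univ_succ, card_isPswEnd_cons_of_center_zero none (by simp),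
      card_isPswEnd_cons_of_center_zero (some 0) (by simp)]
    simp only [card_isPswEnd_cons_of_center_ne_zero _ (Fin.succ_ne_zero _), sum_const, card_univ,
      Fintype.card_fin, smul_eq_mul]
    ring
  rw [sum_add_distrib, ← ncard_pswEndS_succ] at hsum
  simp only [sum_const, card_univ, Fintype.card_option, Fintype.card_fin, smul_eq_mul,
    mul_one] at hsum
  have hpow : (m + 1) * 2 ^ (m + 1) = 2 * 2 ^ m + m * (2 ^ m + 2 ^ m) := by ring
  rw [Nat.add_sub_cancel, hpow]
  omega
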